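/- arXiv:math/0702348 — 4 statements merged into one kernel-verified Lean document; each statement's English description precedes it below -/
import Mathlib

section
/- Let n ≥ 1 and let 𝒜 be a finite union-closed family of subsets of {1, …, n} containing at least C(n−1, 2) + 1 of the 2-element subsets of {1, …, n}. Then for every integer k with 0 ≤ k ≤ ⌊n/2⌋, the number of members of 𝒜 of size n − k is at least the number of members of 𝒜 of size k, i.e. |{A ∈ 𝒜 : |A| = n − k}| ≥ |{A ∈ 𝒜 : |A| = k}|. -/
open Finset

/-- A finite family of finite sets is union-closed if it is closed under pairwise unions. -/
def UnionClosed (𝒜 : Finset (Finset ℕ)) : Prop :=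
  ∀ A ∈ 𝒜, ∀ B ∈ 𝒜, A ∪ B ∈ 𝒜

/-- A nonempty finite union of members of a union-closed family is a member. -/
lemma UnionClosed.biUnion_mem {𝒜 : Finset (Finset ℕ)} (hUC : UnionClosed 𝒜)
    {ι : Type*} [DecidableEq ι] (s : Finset ι) (f : ι → Finset ℕ) :
    s.Nonempty → (∀ i ∈ s, f i ∈ 𝒜) → s.biUnion f ∈ 𝒜 := by
  induction s using Finset.cons_induction with
  | empty => rintro ⟨x, hx⟩; simp at hx
  | cons a s ha ih =>
    intro _ hf
    rw [Finset.cons_eq_insert, Finset.biUnion_insert]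
    rcases s.eq_empty_or_nonempty with rfl | hs
    · simpa using hf a (Finset.mem_cons_self _ _)
    · exact hUC _ (hf a (Finset.mem_cons_self _ _)) _
        (ih hs fun i hi => hf i (Finset.mem_cons_of_mem hi))

/-- If a set meets both sides of a "cross-complete" split, it is in the family. -/
lemma cross_mem {𝒜 : Finset (Finset ℕ)} (hUC : UnionClosed 𝒜) {U V T : Finset ℕ}
    (hcross : ∀ v ∈ V, ∀ w ∈ U, w ∉ V → ({v, w} : Finset ℕ) ∈ 𝒜)
    (hTU : T ⊆ U) (h1 : (T ∩ V).Nonempty) (h2 : (T \ V).Nonempty) : T ∈ 𝒜 := by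
  classical
  obtain ⟨a, ha⟩ := h1; obtain ⟨b, hb⟩ := h2
  rw [Finset.mem_inter] at ha; rw [Finset.mem_sdiff] at hb
  have key : T = T.biUnion (fun v => if v ∈ V then {v, b} else {a, v}) := by
    ext x
    simp only [Finset.mem_biUnion]
    constructor
    · intro hx
      refine ⟨x, hx, ?_⟩
      by_cases h : x ∈ V <;> simp [h]
    · rintro ⟨v, hv, hx⟩
      by_cases h : v ∈ V <;> simp only [if_pos, if_neg, h, if_true, if_false,
        Finset.mem_insert, Finset.mem_singleton] at hx
      · rcases hx with rfl | rfl
        · exact hv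
        · exact hb.1
      · rcases hx with rfl | rfl
        · exact ha.1
        · exact hv
  rw [key]
  refine hUC.biUnion_mem _ _ ⟨a, ha.1⟩ ?_
  intro v hv
  by_cases h : v ∈ V
  · rw [if_pos h]; exact hcross v h b (hTU hb.1) hb.2
  · rw [if_neg h]; exact hcross a ha.2 v (hTU hv) h

/-- If `T ∉ 𝒜` then some element of `T` lies in no member of `𝒜` inside `T`. -/
lemma exists_core {𝒜 : Finset (Finset ℕ)} (hUC : UnionClosed 𝒜) {T : Finset ℕ}
    (hT : T ∉ 𝒜) (hne : T.Nonempty) :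
    ∃ v ∈ T, ∀ B, B ⊆ T → v ∈ B → B ∉ 𝒜 := by
  classical
  by_contra h
  push_neg at h
  choose g hg1 hg2 hg3 using h
  apply hT
  have key : T = T.attach.biUnion (fun v => g v.1 v.2) := by
    ext x
    simp only [Finset.mem_biUnion, Finset.mem_attach, true_and, Subtype.exists]
    constructor
    · intro hx; exact ⟨x, hx, hg2 x hx⟩
    · rintro ⟨v, hv, hx⟩; exact hg1 v hv hx
  rw [key]
  exact hUC.biUnion_mem _ _ (Finset.attach_nonempty_iff.2 hne) (fun i _ => hg3 i.1 i.2)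

/-- If at most `n-2` pairs from `[n]` are missing from `𝒜`, the "missing-pair graph" is
disconnected: there is a proper nonempty `V ⊆ [n]` with all cross pairs in `𝒜`. -/
lemma exists_split {𝒜 : Finset (Finset ℕ)} {n : ℕ} (hn : 2 ≤ n)
    (hbad : (((Finset.Icc 1 n).powersetCard 2).filter (fun P => P ∉ 𝒜)).card ≤ n - 2) :
    ∃ V : Finset ℕ, V ⊆ Finset.Icc 1 n ∧ V.Nonempty ∧ V ≠ Finset.Icc 1 n ∧
      ∀ v ∈ V, ∀ w ∈ Finset.Icc 1 n, w ∉ V → ({v, w} : Finset ℕ) ∈ 𝒜 := by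
  classical
  set U := Finset.Icc 1 n with hU
  have hUcard : U.card = n := by rw [hU, Nat.card_Icc]; omega
  have h1U : (1 : ℕ) ∈ U := by rw [hU, Finset.mem_Icc]; omega
  set step : Finset ℕ → Finset ℕ :=
    fun S => S ∪ U.filter (fun w => ∃ v ∈ S, v ≠ w ∧ ({v, w} : Finset ℕ) ∉ 𝒜) with hstep
  set f : ℕ → Finset ℕ := fun i => step^[i] {1} with hfdef
  have hf0 : f 0 = {1} := rfl
  have hfsucc : ∀ i, f (i + 1) = step (f i) := fun i => Function.iterate_succ_apply' step i {1}
  have hsubstep : ∀ S, S ⊆ step S := fun S => Finset.subset_union_left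
  have hstepU : ∀ S, S ⊆ U → step S ⊆ U := by
    intro S hS
    exact Finset.union_subset hS (Finset.filter_subset _ _)
  have hfU : ∀ i, f i ⊆ U := by
    intro i; induction i with
    | zero => rw [hf0]; intro x hx; simp only [Finset.mem_singleton] at hx; subst hx; exact h1U
    | succ i ih => rw [hfsucc]; exact hstepU _ ih
  have h1f : ∀ i, (1 : ℕ) ∈ f i := by
    intro i; induction i with
    | zero => rw [hf0]; exact Finset.mem_singleton_self 1
    | succ i ih => rw [hfsucc]; exact hsubstep _ ih
  have hprop : ∀ i, step (f i) = f i → ∀ j, f (i + j) = f i := by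
    intro i hi j
    induction j with
    | zero => rfl
    | succ j ih => rw [← Nat.add_assoc, hfsucc (i + j), ih, hi]
  have hstab : step (f n) = f n := by
    by_contra hne
    have hkey : ∀ i, i ≤ n → step (f i) ≠ f i := by
      intro i hi hcontra
      apply hne
      have hfn : f n = f i := by
        have h := hprop i hcontra (n - i)
        rwa [Nat.add_sub_cancel' hi] at h
      rw [hfn, hcontra]
    have hcard : ∀ i, i ≤ n → i + 1 ≤ (f i).card := by
      intro i
      induction i with
      | zero => intro _; rw [hf0]; simp
      | succ i ih =>
        intro hi
        have h1 : i + 1 ≤ (f i).card := ih (by omega)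
        have h2 : f i ⊂ f (i + 1) := by
          rw [hfsucc]
          exact Finset.ssubset_iff_subset_ne.mpr ⟨hsubstep _, fun h => hkey i (by omega) h.symm⟩
        have := Finset.card_lt_card h2
        omega
    have hA := hcard n le_rfl
    have hB := Finset.card_le_card (hfU n)
    rw [hUcard] at hB
    omega
  have hclose : ∀ v ∈ f n, ∀ w ∈ U, v ≠ w → ({v, w} : Finset ℕ) ∉ 𝒜 → w ∈ f n := by
    intro v hv w hw hne' hnotin
    have hmem : w ∈ step (f n) :=
      Finset.mem_union_right _ (Finset.mem_filter.2 ⟨hw, v, hv, hne', hnotin⟩)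
    rwa [hstab] at hmem
  have hcross : ∀ v ∈ f n, ∀ w ∈ U, w ∉ f n → ({v, w} : Finset ℕ) ∈ 𝒜 := by
    intro v hv w hw hwn
    by_contra hc
    exact hwn (hclose v hv w hw (fun h => hwn (h ▸ hv)) hc)
  have hVne : f n ≠ U := by
    intro hfe
    have hex : ∀ w : ℕ, ∃ i, w ∈ f i ∨ n + 1 ≤ i := fun w => ⟨n + 1, Or.inr le_rfl⟩
    have hrank_le : ∀ w ∈ U, Nat.find (hex w) ≤ n := by
      intro w hw
      exact Nat.find_le (Or.inl (show w ∈ f n by rw [hfe]; exact hw))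
    have hrank_mem : ∀ w ∈ U, w ∈ f (Nat.find (hex w)) := by
      intro w hw
      rcases Nat.find_spec (hex w) with h | h
      · exact h
      · exact absurd (hrank_le w hw) (by omega)
    have hrank_not : ∀ (w : ℕ) (i : ℕ), i < Nat.find (hex w) → w ∉ f i := by
      intro w i hi hmem
      exact Nat.find_min (hex w) hi (Or.inl hmem)
    have hrank_pos : ∀ w ∈ U, w ≠ 1 → 1 ≤ Nat.find (hex w) := by
      intro w hw hw1
      by_contra h
      have h0 : Nat.find (hex w) = 0 := by omega
      have hm := hrank_mem w hw
      rw [h0, hf0, Finset.mem_singleton] at hm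
      exact hw1 hm
    have hex2 : ∀ w ∈ U.erase 1, ∃ v, v ∈ f (Nat.find (hex w) - 1) ∧ v ≠ w ∧
        ({v, w} : Finset ℕ) ∉ 𝒜 := by
      intro w hw
      obtain ⟨hw1, hwU⟩ := Finset.mem_erase.1 hw
      have hr1 : 1 ≤ Nat.find (hex w) := hrank_pos w hwU hw1
      have hmem : w ∈ step (f (Nat.find (hex w) - 1)) := by
        rw [← hfsucc]
        have heq : Nat.find (hex w) - 1 + 1 = Nat.find (hex w) := by omega
        rw [heq]
        exact hrank_mem w hwU
      have hnot : w ∉ f (Nat.find (hex w) - 1) := hrank_not w _ (by omega)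
      rcases Finset.mem_union.1 hmem with h | h
      · exact absurd h hnot
      · obtain ⟨-, v, hv, hne', hnin⟩ := Finset.mem_filter.1 h
        exact ⟨v, hv, hne', hnin⟩
    choose gv hgv1 hgv2 hgv3 using hex2
    have hinj : ((U.erase 1).attach).card ≤
        ((U.powersetCard 2).filter (fun P => P ∉ 𝒜)).card := by
      apply Finset.card_le_card_of_injOn (fun w => ({gv w.1 w.2, w.1} : Finset ℕ))
      · rintro ⟨w, hw⟩ -
        simp only [Finset.mem_coe, Finset.mem_filter, Finset.mem_powersetCard]
        obtain ⟨hw1, hwU⟩ := Finset.mem_erase.1 hw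
        refine ⟨⟨?_, Finset.card_pair (hgv2 w hw)⟩, hgv3 w hw⟩
        intro x hx
        simp only [Finset.mem_insert, Finset.mem_singleton] at hx
        rcases hx with rfl | rfl
        · exact hfU _ (hgv1 w hw)
        · exact hwU
      · rintro ⟨w₁, hw₁⟩ - ⟨w₂, hw₂⟩ - heq
        by_contra hne'
        have hww : w₁ ≠ w₂ := fun h => hne' (Subtype.ext h)
        simp only at heq
        have h1 : w₁ = gv w₂ hw₂ := by
          have hmem : w₁ ∈ ({gv w₂ hw₂, w₂} : Finset ℕ) := by
            rw [← heq]; simp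
          simp only [Finset.mem_insert, Finset.mem_singleton] at hmem
          rcases hmem with h | h
          · exact h
          · exact absurd h hww
        have h2 : w₂ = gv w₁ hw₁ := by
          have hmem : w₂ ∈ ({gv w₁ hw₁, w₁} : Finset ℕ) := by
            rw [heq]; simp
          simp only [Finset.mem_insert, Finset.mem_singleton] at hmem
          rcases hmem with h | h
          · exact h
          · exact absurd h hww.symm
        have hw1U := (Finset.mem_erase.1 hw₁).2
        have hw2U := (Finset.mem_erase.1 hw₂).2
        have hp1 : 1 ≤ Nat.find (hex w₁) := hrank_pos w₁ hw1U (Finset.mem_erase.1 hw₁).1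
        have hp2 : 1 ≤ Nat.find (hex w₂) := hrank_pos w₂ hw2U (Finset.mem_erase.1 hw₂).1
        have hr1 : Nat.find (hex w₁) ≤ Nat.find (hex w₂) - 1 := by
          rw [h1]; exact Nat.find_le (Or.inl (hgv1 w₂ hw₂))
        have hr2 : Nat.find (hex w₂) ≤ Nat.find (hex w₁) - 1 := by
          rw [h2]; exact Nat.find_le (Or.inl (hgv1 w₁ hw₁))
        omega
    rw [Finset.card_attach, Finset.card_erase_of_mem h1U, hUcard] at hinj
    omega
  exact ⟨f n, hfU n, ⟨1, h1f n⟩, hVne, hcross⟩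

/-- A union-closed family of subsets of `{1, …, n}` containing more than `C(n-1,2)` of the
2-element subsets has, for each `0 ≤ k ≤ ⌊n/2⌋`, at least as many `(n-k)`-sets as `k`-sets. -/
theorem many_two_sets_implies_upper_shadow_larger
    (n : ℕ) (hn : 1 ≤ n)
    (𝒜 : Finset (Finset ℕ)) (hUC : UnionClosed 𝒜)
    (hsub : ∀ A ∈ 𝒜, A ⊆ Finset.Icc 1 n)
    (h2 : (𝒜.filter (fun A => A.card = 2)).card ≥ Nat.choose (n - 1) 2 + 1) :
    ∀ k : ℕ, k ≤ n / 2 →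
      (𝒜.filter (fun A => A.card = n - k)).card ≥ (𝒜.filter (fun A => A.card = k)).card := by
  classical
  intro k hk
  have hUcard : (Finset.Icc 1 n).card = n := by rw [Nat.card_Icc]; omega
  have hfilter : ∀ j : ℕ, 𝒜.filter (fun A => A.card = j)
      = ((Finset.Icc 1 n).powersetCard j).filter (fun A => A ∈ 𝒜) := by
    intro j; ext A
    simp only [Finset.mem_filter, Finset.mem_powersetCard]
    constructor
    · rintro ⟨h1, h2⟩; exact ⟨⟨hsub A h1, h2⟩, h1⟩
    · rintro ⟨⟨-, h2⟩, h1⟩; exact ⟨h1, h2⟩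
  have hcount : ∀ j : ℕ, (𝒜.filter (fun A => A.card = j)).card
      + (((Finset.Icc 1 n).powersetCard j).filter (fun A => A ∉ 𝒜)).card = n.choose j := by
    intro j
    rw [hfilter j]
    have h := Finset.card_filter_add_card_filter_not
      (s := (Finset.Icc 1 n).powersetCard j) (p := fun A => A ∈ 𝒜)
    rw [Finset.card_powersetCard, hUcard] at h
    exact h
  -- rule out n = 1
  have hn2 : 2 ≤ n := by
    by_contra hcon
    have hn1 : n = 1 := by omega
    subst hn1
    have hzero : (𝒜.filter fun A => A.card = 2).card = 0 := by
      apply Finset.card_eq_zero.2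
      apply Finset.filter_eq_empty_iff.2
      intro A hA
      have h1 : A.card ≤ (Finset.Icc 1 1).card := Finset.card_le_card (hsub A hA)
      simp at h1
      omega
    rw [hzero] at h2
    have : Nat.choose 0 2 = 0 := rfl
    omega
  -- at most n - 2 pairs are missing
  have hbad2 : (((Finset.Icc 1 n).powersetCard 2).filter (fun P => P ∉ 𝒜)).card ≤ n - 2 := by
    have hc := hcount 2
    obtain ⟨m, rfl⟩ : ∃ m, n = m + 1 := ⟨n - 1, by omega⟩
    have hch : (m + 1).choose 2 = m.choose 1 + m.choose 2 := Nat.choose_succ_succ m 1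
    rw [Nat.choose_one_right] at hch
    simp only [Nat.add_sub_cancel] at h2
    omega
  obtain ⟨V, hVU, hVnon, hVneU, hcross⟩ := exists_split hn2 hbad2
  -- k = 0 : [n] ∈ 𝒜
  rcases Nat.eq_zero_or_pos k with rfl | hk1
  · have hUmem : Finset.Icc 1 n ∈ 𝒜 := by
      obtain ⟨w, hwU, hwV⟩ := Finset.exists_of_ssubset (ssubset_of_subset_of_ne hVU hVneU)
      apply cross_mem hUC hcross Finset.Subset.rfl
      · obtain ⟨v, hv⟩ := hVnon
        exact ⟨v, Finset.mem_inter.2 ⟨hVU hv, hv⟩⟩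
      · exact ⟨w, Finset.mem_sdiff.2 ⟨hwU, hwV⟩⟩
    have hge1 : 1 ≤ (𝒜.filter fun A => A.card = n - 0).card := by
      rw [Nat.one_le_iff_ne_zero, ← Nat.pos_iff_ne_zero, Finset.card_pos]
      exact ⟨Finset.Icc 1 n, Finset.mem_filter.2 ⟨hUmem, by simp [hUcard]⟩⟩
    have hle1 : (𝒜.filter fun A => A.card = 0).card ≤ 1 := by
      apply Finset.card_le_one.2
      intro a ha b hb
      simp only [Finset.mem_filter, Finset.card_eq_zero] at ha hb
      rw [ha.2, hb.2]
    omega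
  -- k = n - k : trivial
  rcases Nat.lt_or_ge (2 * k) n with hlt | hge
  swap
  · have heq : n - k = k := by omega
    rw [heq]
  -- main case : 1 ≤ k, 2k < n
  · have hkm : k < n - k := by omega
    have hm2 : 2 ≤ n - k := by omega
    -- structure of bad (n-k)-sets
    have hstruct : ∀ T, T ∈ ((Finset.Icc 1 n).powersetCard (n - k)).filter (fun T => T ∉ 𝒜)
        → T ⊆ V ∨ T ⊆ Finset.Icc 1 n \ V := by
      intro T hTmem
      simp only [Finset.mem_filter, Finset.mem_powersetCard] at hTmem
      obtain ⟨⟨hTU', hTcard⟩, hTnot⟩ := hTmem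
      by_contra hcon
      push_neg at hcon
      apply hTnot
      apply cross_mem hUC hcross hTU'
      · by_contra hemp
        rw [Finset.not_nonempty_iff_eq_empty] at hemp
        apply hcon.2
        intro x hx
        rw [Finset.mem_sdiff]
        refine ⟨hTU' hx, fun hxV => ?_⟩
        exact Finset.eq_empty_iff_forall_notMem.1 hemp x (Finset.mem_inter.2 ⟨hx, hxV⟩)
      · by_contra hemp
        rw [Finset.not_nonempty_iff_eq_empty] at hemp
        apply hcon.1
        intro x hx
        by_contra hxV
        exact Finset.eq_empty_iff_forall_notMem.1 hemp x (Finset.mem_sdiff.2 ⟨hx, hxV⟩)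
    -- double counting between bad (n-k)-sets and bad k-sets
    have hdpos : 0 < ((n - k) - 1).choose (k - 1) := Nat.choose_pos (by omega)
    have hTBcard :
        (((Finset.Icc 1 n).powersetCard (n - k)).filter (fun T => T ∉ 𝒜)).card ≤
        (((Finset.Icc 1 n).powersetCard k).filter (fun B => B ∉ 𝒜)).card := by
      have hmul := Finset.card_mul_le_card_mul (fun T B => B ⊆ T)
        (s := ((Finset.Icc 1 n).powersetCard (n - k)).filter (fun T => T ∉ 𝒜))
        (t := ((Finset.Icc 1 n).powersetCard k).filter (fun B => B ∉ 𝒜))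
        (m := ((n - k) - 1).choose (k - 1)) (n := ((n - k) - 1).choose (k - 1))
        ?_ ?_
      · exact Nat.le_of_mul_le_mul_right hmul hdpos
      · -- each bad (n-k)-set has many bad k-subsets
        intro T hTmem
        have hTmem' := hTmem
        simp only [Finset.mem_filter, Finset.mem_powersetCard] at hTmem'
        obtain ⟨⟨hTU', hTcard⟩, hTnot⟩ := hTmem'
        have hTne : T.Nonempty := Finset.card_pos.1 (by omega)
        obtain ⟨v, hvT, hv⟩ := exists_core hUC hTnot hTne
        have hinj : ((T.erase v).powersetCard (k - 1)).card ≤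
            ((((Finset.Icc 1 n).powersetCard k).filter (fun B => B ∉ 𝒜)).bipartiteAbove
              (fun T B => B ⊆ T) T).card := by
          apply Finset.card_le_card_of_injOn (fun B' => insert v B')
          · intro B' hB'
            rw [Finset.mem_coe, Finset.mem_powersetCard] at hB'
            obtain ⟨hB'sub, hB'card⟩ := hB'
            have hvB' : v ∉ B' := fun h => (Finset.mem_erase.1 (hB'sub h)).1 rfl
            have hBT : insert v B' ⊆ T :=
              Finset.insert_subset hvT (hB'sub.trans (T.erase_subset v))
            have hcardB : (insert v B').card = k := by
              rw [Finset.card_insert_of_notMem hvB', hB'card]; omega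
            rw [Finset.mem_coe, Finset.mem_bipartiteAbove]
            exact ⟨Finset.mem_filter.2 ⟨Finset.mem_powersetCard.2 ⟨hBT.trans hTU', hcardB⟩,
              hv _ hBT (Finset.mem_insert_self v B')⟩, hBT⟩
          · intro B₁ h₁ B₂ h₂ heq
            rw [Finset.mem_coe, Finset.mem_powersetCard] at h₁ h₂
            have hv₁ : v ∉ B₁ := fun h => (Finset.mem_erase.1 (h₁.1 h)).1 rfl
            have hv₂ : v ∉ B₂ := fun h => (Finset.mem_erase.1 (h₂.1 h)).1 rfl
            have heq' : insert v B₁ = insert v B₂ := heq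
            rw [← Finset.erase_insert hv₁, ← Finset.erase_insert hv₂, heq']
        calc ((n - k) - 1).choose (k - 1)
            = ((T.erase v).powersetCard (k - 1)).card := by
              rw [Finset.card_powersetCard, Finset.card_erase_of_mem hvT, hTcard]
          _ ≤ _ := hinj
      · -- each bad k-set has few bad (n-k)-supersets
        intro B hBmem
        have hBmem' := hBmem
        simp only [Finset.mem_filter, Finset.mem_powersetCard] at hBmem'
        obtain ⟨⟨hBU, hBcard⟩, hBnot⟩ := hBmem'
        have hBne : B.Nonempty := Finset.card_pos.1 (by omega)
        have key : ∀ W : Finset ℕ, W.card ≤ n - 1 → B ⊆ W →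
            (∀ T, T ∈ ((((Finset.Icc 1 n).powersetCard (n - k)).filter
              (fun T => T ∉ 𝒜)).bipartiteBelow (fun T B => B ⊆ T) B) → T ⊆ W) →
            ((((Finset.Icc 1 n).powersetCard (n - k)).filter
              (fun T => T ∉ 𝒜)).bipartiteBelow (fun T B => B ⊆ T) B).card ≤
            ((n - k) - 1).choose (k - 1) := by
          intro W hWcard hBW hTW
          have hinj : ((((Finset.Icc 1 n).powersetCard (n - k)).filter
              (fun T => T ∉ 𝒜)).bipartiteBelow (fun T B => B ⊆ T) B).card ≤
              ((W \ B).powersetCard ((n - k) - k)).card := by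
            apply Finset.card_le_card_of_injOn (fun T => T \ B)
            · intro T hTmem2
              have hTW' := hTW T hTmem2
              rw [Finset.mem_coe, Finset.mem_bipartiteBelow] at hTmem2
              obtain ⟨hT𝒯, hBT⟩ := hTmem2
              simp only [Finset.mem_filter, Finset.mem_powersetCard] at hT𝒯
              rw [Finset.mem_coe, Finset.mem_powersetCard]
              constructor
              · exact Finset.sdiff_subset_sdiff hTW' Finset.Subset.rfl
              · rw [Finset.card_sdiff_of_subset hBT, hT𝒯.1.2, hBcard]
            · intro T₁ h₁ T₂ h₂ heq
              rw [Finset.mem_coe, Finset.mem_bipartiteBelow] at h₁ h₂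
              have heq' : T₁ \ B = T₂ \ B := heq
              rw [← Finset.union_sdiff_of_subset h₁.2, ← Finset.union_sdiff_of_subset h₂.2, heq']
          have hWB : (W \ B).card = W.card - k := by
            rw [Finset.card_sdiff_of_subset hBW, hBcard]
          calc ((((Finset.Icc 1 n).powersetCard (n - k)).filter
              (fun T => T ∉ 𝒜)).bipartiteBelow (fun T B => B ⊆ T) B).card
              ≤ ((W \ B).powersetCard ((n - k) - k)).card := hinj
            _ = (W \ B).card.choose ((n - k) - k) := Finset.card_powersetCard _ _
            _ ≤ ((n - k) - 1).choose ((n - k) - k) := by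
                apply Nat.choose_le_choose
                omega
            _ = ((n - k) - 1).choose (k - 1) := by
                have hdiff : ((n - k) - 1) - (k - 1) = (n - k) - k := by omega
                rw [← hdiff]
                exact Nat.choose_symm (by omega)
        by_cases hcase1 : B ⊆ V
        · apply key V ?_ hcase1 ?_
          · have := Finset.card_lt_card (ssubset_of_subset_of_ne hVU hVneU)
            omega
          · intro T hTmem2
            rw [Finset.mem_bipartiteBelow] at hTmem2
            obtain ⟨hT𝒯, hBT⟩ := hTmem2
            rcases hstruct T hT𝒯 with h | h
            · exact h
            · exfalso
              obtain ⟨b, hb⟩ := hBne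
              have hbV : b ∈ Finset.Icc 1 n \ V := h (hBT hb)
              exact (Finset.mem_sdiff.1 hbV).2 (hcase1 hb)
        · by_cases hcase2 : B ⊆ Finset.Icc 1 n \ V
          · apply key (Finset.Icc 1 n \ V) ?_ hcase2 ?_
            · rw [Finset.card_sdiff_of_subset hVU, hUcard]
              have := Finset.card_pos.2 hVnon
              omega
            · intro T hTmem2
              rw [Finset.mem_bipartiteBelow] at hTmem2
              obtain ⟨hT𝒯, hBT⟩ := hTmem2
              rcases hstruct T hT𝒯 with h | h
              · exfalso
                obtain ⟨b, hb⟩ := hBne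
                exact (Finset.mem_sdiff.1 (hcase2 hb)).2 (h (hBT hb))
              · exact h
          · -- B fits in neither side: no bad supersets at all
            have hempty : ((((Finset.Icc 1 n).powersetCard (n - k)).filter
                (fun T => T ∉ 𝒜)).bipartiteBelow (fun T B => B ⊆ T) B) = ∅ := by
              rw [Finset.eq_empty_iff_forall_notMem]
              intro T hTmem2
              rw [Finset.mem_bipartiteBelow] at hTmem2
              obtain ⟨hT𝒯, hBT⟩ := hTmem2
              rcases hstruct T hT𝒯 with h | h
              · exact hcase1 (hBT.trans h)
              · exact hcase2 (hBT.trans h)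
            rw [hempty]
            simp
    -- assemble
    have hc1 := hcount k
    have hc2 := hcount (n - k)
    have hsym : n.choose (n - k) = n.choose k := Nat.choose_symm (by omega)
    omega
end

section
/- Let S be a 5-element set and let 𝒜 be a finite union-closed family of finite sets containing all five 4-element subsets of S. Then there exists an element x ∈ S such that 2·|{A ∈ 𝒜 : x ∈ A}| ≥ |𝒜|. (All five 4-subsets of a 5-set generate an FC(5)-family.) -/
/-!
Split `𝒜` according to the part `A \ S` of its members outside `S`. The traces `A ∩ S` of one
class form a union-closed family `𝒢` of subsets of `S` that is also closed under union with the
4-subsets of `S`, and it suffices to show that the members of `𝒢` have average size at least `5/2`: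
then the elements of `S` lie in at least `5 |𝒜| / 2` members of `𝒜` altogether, so one of them
lies in half of them.

With `nⱼ` the number of `j`-sets in `𝒢`, the claim is `5 n₅ + 3 n₄ + n₃ ≥ n₂ + 3 n₁ + 5 n₀`.
Union with 4-sets puts `S` into `𝒢`, and `S \ {z}` into `𝒢` whenever some member misses `z`;
this bounds `n₄` from below in terms of the smallest members. The remaining deficit is covered by
double counting the 3-sets `{z} ∪ t` with `t` a 2-set and `{z}` a singleton of `𝒢`.
-/

open Finset
open scoped FinsetFamily

section Slices

variable {α : Type*} {𝒢 : Finset (Finset α)} {S : Finset α} {n : ℕ}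

theorem sum_card_slice_of_card_le (h : ∀ t ∈ 𝒢, #t ≤ n) :
    ∑ r ∈ range (n + 1), #(𝒢 # r) = #𝒢 :=
  (card_eq_sum_card_fiberwise fun t ht => mem_range.2 (Nat.lt_succ_of_le (h t ht))).symm

theorem sum_mul_card_slice_of_card_le (h : ∀ t ∈ 𝒢, #t ≤ n) :
    ∑ r ∈ range (n + 1), r * #(𝒢 # r) = ∑ t ∈ 𝒢, #t := by
  rw [← sum_fiberwise_of_maps_to fun t ht => mem_range.2 (Nat.lt_succ_of_le (h t ht))]
  refine sum_congr rfl fun r _ => ?_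
  rw [sum_congr rfl fun t ht => (mem_filter.1 ht).2, sum_const, smul_eq_mul, mul_comm]
  rfl

theorem slice_subset_powersetCard (h : ∀ t ∈ 𝒢, t ⊆ S) (r : ℕ) : 𝒢 # r ⊆ S.powersetCard r :=
  fun t ht => mem_powersetCard.2 ⟨h t (slice_subset ht), (mem_slice.1 ht).2⟩

theorem card_slice_le_choose (h : ∀ t ∈ 𝒢, t ⊆ S) (r : ℕ) : #(𝒢 # r) ≤ (#S).choose r :=
  (card_le_card (slice_subset_powersetCard h r)).trans (card_powersetCard r S).le

end Slices

section Generic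

variable {α : Type*} [DecidableEq α]

theorem exists_card_le_two_mul_card_filter_mem {S : Finset α} {𝒜 : Finset (Finset α)}
    (hS : S.Nonempty) (h : #S * #𝒜 ≤ 2 * ∑ A ∈ 𝒜, #(A ∩ S)) :
    ∃ x ∈ S, #𝒜 ≤ 2 * #{A ∈ 𝒜 | x ∈ A} := by
  have hdegree : ∑ A ∈ 𝒜, #(A ∩ S) = ∑ x ∈ S, #{A ∈ 𝒜 | x ∈ A} := by
    simp_rw [inter_comm _ S, ← filter_mem_eq_inter, card_eq_sum_ones, sum_filter]
    exact sum_comm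
  refine exists_le_of_sum_le hS ?_
  simpa only [sum_const, smul_eq_mul, ← mul_sum, hdegree] using h

def traceFiber (𝒜 : Finset (Finset α)) (S D : Finset α) : Finset (Finset α) :=
  {A ∈ 𝒜 | A \ S = D}.image (· ∩ S)

section TraceFiber

variable {𝒜 : Finset (Finset α)} {S D t : Finset α}

theorem mem_traceFiber : t ∈ traceFiber 𝒜 S D ↔ ∃ A ∈ 𝒜, A \ S = D ∧ A ∩ S = t := by
  simp [traceFiber, and_assoc]

theorem subset_of_mem_traceFiber (ht : t ∈ traceFiber 𝒜 S D) : t ⊆ S := by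
  obtain ⟨A, -, -, rfl⟩ := mem_traceFiber.1 ht
  exact inter_subset_right

theorem traceFiber_nonempty (hD : D ∈ 𝒜.image (· \ S)) : (traceFiber 𝒜 S D).Nonempty := by
  obtain ⟨A, hA, hAD⟩ := mem_image.1 hD
  exact ⟨A ∩ S, mem_traceFiber.2 ⟨A, hA, hAD, rfl⟩⟩

theorem sum_sum_traceFiber {M : Type*} [AddCommMonoid M] (f : Finset α → M) :
    ∑ D ∈ 𝒜.image (· \ S), ∑ t ∈ traceFiber 𝒜 S D, f t = ∑ A ∈ 𝒜, f (A ∩ S) := by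
  refine (sum_congr rfl fun D _ => sum_image fun A hA B hB hAB => ?_).trans
    (sum_fiberwise_of_maps_to (fun A hA => mem_image_of_mem (· \ S) hA) _)
  calc A = A \ S ∪ A ∩ S := (sdiff_union_inter A S).symm
    _ = B \ S ∪ B ∩ S := by rw [(mem_filter.1 hA).2, (mem_filter.1 hB).2, hAB]
    _ = B := sdiff_union_inter B S

theorem sum_card_traceFiber : ∑ D ∈ 𝒜.image (· \ S), #(traceFiber 𝒜 S D) = #𝒜 := by
  simpa only [card_eq_sum_ones] using sum_sum_traceFiber (𝒜 := 𝒜) (S := S) fun _ => 1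

end TraceFiber

variable {𝒢 : Finset (Finset α)} {S t : Finset α}

theorem card_sub_mul_card_slice_le (B : Finset α) (r : ℕ)
    (h : ∀ t ∈ 𝒢 # r, ∀ z ∈ B \ t, insert z t ∈ 𝒢) :
    (#B - r) * #(𝒢 # r) ≤ (r + 1) * #(𝒢 # (r + 1)) := by
  rw [mul_comm, mul_comm (r + 1)]
  refine card_mul_le_card_mul (· ⊆ ·) (fun t ht => ?_) (fun u hu => ?_)
  · have htr : #t = r := (mem_slice.1 ht).2
    calc #B - r ≤ #(B \ t) := htr ▸ le_card_sdiff t B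
      _ = #((B \ t).image (insert · t)) :=
        (card_image_of_injOn fun z hz w hw hzw => (insert_inj (mem_sdiff.1 hz).2).1 hzw).symm
      _ ≤ _ := card_le_card fun u hu => by
        obtain ⟨z, hz, rfl⟩ := mem_image.1 hu
        refine (mem_bipartiteAbove _).2 ⟨mem_slice.2 ⟨h t ht z hz, ?_⟩, subset_insert z t⟩
        rw [card_insert_of_notMem (mem_sdiff.1 hz).2, htr]
  · calc #((𝒢 # r).bipartiteBelow (· ⊆ ·) u) ≤ #(u.powersetCard r) :=
          card_le_card fun t ht => by
            obtain ⟨ht, htu⟩ := (mem_bipartiteBelow _).1 ht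
            exact mem_powersetCard.2 ⟨htu, (mem_slice.1 ht).2⟩
      _ = r + 1 := by rw [card_powersetCard, (mem_slice.1 hu).2, Nat.choose_succ_self_right]

theorem card_le_card_slice_of_forall_erase_mem {X : Finset α} (hX : X ⊆ S)
    (h : ∀ z ∈ X, S.erase z ∈ 𝒢) : #X ≤ #(𝒢 # (#S - 1)) :=
  card_le_card_of_injOn S.erase
    (fun z hz => mem_slice.2 ⟨h z hz, card_erase_of_mem (hX hz)⟩)
    ((erase_injOn S).mono hX)

theorem erase_mem_of_notMem (h𝒢S : ∀ t ∈ 𝒢, t ⊆ S)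
    (hco : ∀ t ∈ 𝒢, ∀ z ∈ S, t ∪ S.erase z ∈ 𝒢) (ht : t ∈ 𝒢) {z : α} (hz : z ∈ S) (hzt : z ∉ t) :
    S.erase z ∈ 𝒢 := by
  simpa only [union_eq_right.2 (subset_erase.2 ⟨h𝒢S t ht, hzt⟩)] using hco t ht z hz

theorem self_mem_of_union_erase_mem (h𝒢S : ∀ t ∈ 𝒢, t ⊆ S)
    (hco : ∀ t ∈ 𝒢, ∀ z ∈ S, t ∪ S.erase z ∈ 𝒢)
    (hne : 𝒢.Nonempty) (hS : 1 < #S) : S ∈ 𝒢 := by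
  obtain ⟨t, ht⟩ := hne
  obtain ⟨x, hx, y, hy, hxy⟩ := one_lt_card.1 hS
  have hcover : S.erase x ∪ S.erase y = S := by
    ext z
    simp only [mem_union, mem_erase]
    grind
  simpa only [union_assoc, hcover, union_eq_right.2 (h𝒢S t ht)] using hco _ (hco t ht x hx) y hy

theorem sub_le_card_slice_pred (h𝒢S : ∀ t ∈ 𝒢, t ⊆ S)
    (hco : ∀ t ∈ 𝒢, ∀ z ∈ S, t ∪ S.erase z ∈ 𝒢)
    {j : ℕ} (hj : (𝒢 # j).Nonempty) : #S - j ≤ #(𝒢 # (#S - 1)) := by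
  obtain ⟨t, ht⟩ := hj
  obtain ⟨ht𝒢, rfl⟩ := mem_slice.1 ht
  rw [← card_sdiff_of_subset (h𝒢S t ht𝒢)]
  exact card_le_card_slice_of_forall_erase_mem sdiff_subset fun z hz =>
    erase_mem_of_notMem h𝒢S hco ht𝒢 (mem_sdiff.1 hz).1 (mem_sdiff.1 hz).2

theorem card_le_card_slice_pred (h𝒢S : ∀ t ∈ 𝒢, t ⊆ S)
    (hco : ∀ t ∈ 𝒢, ∀ z ∈ S, t ∪ S.erase z ∈ 𝒢)
    (h1 : 1 < #(𝒢 # 1)) : #S ≤ #(𝒢 # (#S - 1)) := by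
  obtain ⟨s, hs, s', hs', hss'⟩ := one_lt_card.1 h1
  obtain ⟨u, rfl⟩ := card_eq_one.1 (mem_slice.1 hs).2
  obtain ⟨v, rfl⟩ := card_eq_one.1 (mem_slice.1 hs').2
  refine card_le_card_slice_of_forall_erase_mem Subset.rfl fun z hz => ?_
  by_cases hzu : z = u
  · subst hzu
    exact erase_mem_of_notMem h𝒢S hco (slice_subset hs') hz (by simpa using hss')
  · exact erase_mem_of_notMem h𝒢S hco (slice_subset hs) hz (by simpa using hzu)

theorem card_slice_one (h𝒢S : ∀ t ∈ 𝒢, t ⊆ S) : #(𝒢 # 1) = #{z ∈ S | {z} ∈ 𝒢} := by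
  suffices 𝒢 # 1 = {z ∈ S | {z} ∈ 𝒢}.map ⟨singleton, singleton_injective⟩ by
    rw [this, card_map]
  ext t
  simp only [mem_slice, card_eq_one, mem_map, mem_filter, Function.Embedding.coeFn_mk]
  constructor
  · rintro ⟨ht, z, rfl⟩
    exact ⟨z, ⟨singleton_subset_iff.1 (h𝒢S _ ht), ht⟩, rfl⟩
  · rintro ⟨z, ⟨-, hz⟩, rfl⟩
    exact ⟨hz, z, rfl⟩

end Generic

section UnionClosed

variable {S t : Finset ℕ} {𝒜 𝒢 : Finset (Finset ℕ)}

theorem union_inter_mem_traceFiber {B D : Finset ℕ} (hUC : UnionClosed 𝒜)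
    (ht : t ∈ traceFiber 𝒜 S D) (hB : B ∈ 𝒜) (hBD : B \ S ⊆ D) :
    t ∪ B ∩ S ∈ traceFiber 𝒜 S D := by
  obtain ⟨A, hA, hAD, rfl⟩ := mem_traceFiber.1 ht
  refine mem_traceFiber.2 ⟨A ∪ B, hUC A hA B hB, ?_, union_inter_distrib_right A B S⟩
  rw [union_sdiff_distrib, hAD, union_eq_left.2 hBD]

theorem unionClosed_traceFiber {D : Finset ℕ} (hUC : UnionClosed 𝒜) :
    UnionClosed (traceFiber 𝒜 S D) := fun t ht t' ht' => by
  obtain ⟨B, hB, hBD, rfl⟩ := mem_traceFiber.1 ht'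
  exact union_inter_mem_traceFiber hUC ht hB hBD.le

theorem union_mem_traceFiber_of_subset {D T : Finset ℕ} (hUC : UnionClosed 𝒜)
    (ht : t ∈ traceFiber 𝒜 S D) (hT : T ∈ 𝒜) (hTS : T ⊆ S) : t ∪ T ∈ traceFiber 𝒜 S D := by
  simpa only [inter_eq_left.2 hTS] using
    union_inter_mem_traceFiber hUC ht hT (sdiff_eq_empty_iff_subset.2 hTS ▸ empty_subset D)

theorem slice_three_nonempty (hUC : UnionClosed 𝒢) (hS : 3 ≤ #S) (h : S.powersetCard 2 ⊆ 𝒢) :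
    (𝒢 # 3).Nonempty := by
  obtain ⟨u, huS, hu⟩ := exists_subset_card_eq hS
  obtain ⟨x, y, z, hxy, hxz, hyz, rfl⟩ := card_eq_three.1 hu
  simp only [insert_subset_iff, singleton_subset_iff] at huS
  have hpair : ∀ a ∈ S, ∀ b ∈ S, a ≠ b → ({a, b} : Finset ℕ) ∈ 𝒢 := fun a ha b hb hab =>
    h (mem_powersetCard.2 ⟨by simp [insert_subset_iff, ha, hb], card_pair hab⟩)
  refine ⟨{x, y} ∪ {y, z}, mem_slice.2 ⟨hUC _ (hpair x huS.1 y huS.2.1 hxy) _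
    (hpair y huS.2.1 z huS.2.2 hyz), ?_⟩⟩
  rw [← hu]
  congr 1
  ext
  simp only [mem_union, mem_insert, mem_singleton]
  tauto

theorem five_mul_card_le_two_mul_sum_card (hS : #S = 5) (h𝒢S : ∀ t ∈ 𝒢, t ⊆ S)
    (hne : 𝒢.Nonempty) (hUC : UnionClosed 𝒢) (hco : ∀ t ∈ 𝒢, ∀ z ∈ S, t ∪ S.erase z ∈ 𝒢) :
    5 * #𝒢 ≤ 2 * ∑ t ∈ 𝒢, #t := by
  have hcard : ∀ t ∈ 𝒢, #t ≤ 5 := fun t ht => hS ▸ card_le_card (h𝒢S t ht)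
  rw [← sum_card_slice_of_card_le hcard, ← sum_mul_card_slice_of_card_le hcard]
  simp only [sum_range_succ, sum_range_zero]
  have hchoose := card_slice_le_choose h𝒢S
  rw [hS] at hchoose
  have h0 : #(𝒢 # 0) ≤ 1 := hchoose 0
  have h1 : #(𝒢 # 1) ≤ 5 := hchoose 1
  have h2 : #(𝒢 # 2) ≤ 10 := hchoose 2
  have h5 : 0 < #(𝒢 # 5) :=
    card_pos.2 ⟨S, mem_slice.2 ⟨self_mem_of_union_erase_mem h𝒢S hco hne (by omega), hS⟩⟩
  have hmissed : ∀ j, 0 < #(𝒢 # j) → 5 - j ≤ #(𝒢 # 4) := fun j hj => by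
    simpa [hS] using sub_le_card_slice_pred h𝒢S hco (card_pos.1 hj)
  have hsingletons : 1 < #(𝒢 # 1) → 5 ≤ #(𝒢 # 4) := fun h => by
    simpa [hS] using card_le_card_slice_pred h𝒢S hco h
  have hdouble : (#(𝒢 # 1) - 2) * #(𝒢 # 2) ≤ 3 * #(𝒢 # 3) := by
    rw [card_slice_one h𝒢S]
    refine card_sub_mul_card_slice_le _ 2 fun t ht z hz => ?_
    rw [insert_eq]
    exact hUC _ (mem_filter.1 (mem_sdiff.1 hz).1).2 _ (slice_subset ht)
  have htriple : #(𝒢 # 2) = 10 → 0 < #(𝒢 # 3) := fun h => by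
    have hall : 𝒢 # 2 = S.powersetCard 2 :=
      eq_of_subset_of_card_le (slice_subset_powersetCard h𝒢S 2) <| by
        rw [card_powersetCard, hS, h]
        decide
    exact card_pos.2 (slice_three_nonempty hUC (by omega) (hall ▸ slice_subset))
  have := hmissed 0
  have := hmissed 1
  have := hmissed 2
  -- Once `#(𝒢 # 1)` is fixed, `hdouble` is linear.
  interval_cases #(𝒢 # 1) <;> omega

end UnionClosed

/-- All five 4-subsets of a 5-set generate an FC(5)-family. -/
theorem fc_all_foursets_of_fiveset
    (S : Finset ℕ) (hS : S.card = 5)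
    (𝒜 : Finset (Finset ℕ)) (hUC : UnionClosed 𝒜)
    (h4 : ∀ T ⊆ S, T.card = 4 → T ∈ 𝒜) :
    ∃ x ∈ S, 2 * (𝒜.filter (fun A => x ∈ A)).card ≥ 𝒜.card := by
  have hfiber : ∀ D ∈ 𝒜.image (· \ S),
      5 * #(traceFiber 𝒜 S D) ≤ 2 * ∑ t ∈ traceFiber 𝒜 S D, #t := fun D hD =>
    five_mul_card_le_two_mul_sum_card hS (fun _ => subset_of_mem_traceFiber)
      (traceFiber_nonempty hD) (unionClosed_traceFiber hUC) fun t ht z hz =>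
        union_mem_traceFiber_of_subset hUC ht
          (h4 _ (erase_subset z S) (by rw [card_erase_of_mem hz, hS])) (erase_subset z S)
  have hcount : #S * #𝒜 ≤ 2 * ∑ A ∈ 𝒜, #(A ∩ S) :=
    calc #S * #𝒜 = ∑ D ∈ 𝒜.image (· \ S), 5 * #(traceFiber 𝒜 S D) := by
          rw [hS, ← mul_sum, sum_card_traceFiber]
      _ ≤ ∑ D ∈ 𝒜.image (· \ S), 2 * ∑ t ∈ traceFiber 𝒜 S D, #t := sum_le_sum hfiber
      _ = 2 * ∑ A ∈ 𝒜, #(A ∩ S) := by rw [← mul_sum, sum_sum_traceFiber]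
  exact exists_card_le_two_mul_card_filter_mem (card_pos.1 (by omega)) hcount
end

section
/- Let ℬ be the union-closed family generated by the five sets {1,2,3}, {1,2,3,4}, {1,2,3,5}, {1,2,4,5} and {1,3,4,5} (subsets of ℕ). Then ℬ is not an FC-family: there exists a finite union-closed family 𝒜 of finite subsets of ℕ with ℬ ⊆ 𝒜 such that for every element x ∈ {1,2,3,4,5} we have 2·|{A ∈ 𝒜 : x ∈ A}| < |𝒜|. -/
/-- The union-closed family generated by a finite set system `𝒮`: the empty set together
with all unions of nonempty subfamilies of `𝒮`. -/
def generatedFamily (𝒮 : Finset (Finset ℕ)) : Finset (Finset ℕ) :=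
  insert ∅ ((𝒮.powerset.filter (fun T => T.Nonempty)).image (fun T => T.sup id))
/-! A Poonen-type gluing. Over a union-closed family of "levels" on fresh atoms
`G = {6, …, 76}` we stack fibres of subsets of `[5] = {1, …, 5}`: the base family `ℬ` over `∅`,
all of `2^[5]` over `G`, and `ℬ ∪ 2^([5] \ {c g})` over each coatom `G \ {g}`, where the colouring
`c : G → [5]` uses the colours `1, …, 5` with multiplicities `23, 16, 16, 8, 8`. Since `ℬ \ {∅}` is
an up-set of `2^[5]`, every fibre is union-closed, and fibres grow with the level, so the glued
family is union-closed. Its size and the degrees of its elements are sums over the fibres: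
`1537` sets, each `x ∈ [5]` lying in exactly `768` of them. -/

open Finset

section FibredFamily

variable {𝒲 : Finset (Finset ℕ)} {𝒯 : Finset ℕ → Finset (Finset ℕ)}

def fibredFamily (𝒲 : Finset (Finset ℕ)) (𝒯 : Finset ℕ → Finset (Finset ℕ)) :
    Finset (Finset ℕ) :=
  𝒲.biUnion fun W => (𝒯 W).image (· ∪ W)

theorem mem_fibredFamily {A : Finset ℕ} :
    A ∈ fibredFamily 𝒲 𝒯 ↔ ∃ W ∈ 𝒲, ∃ T ∈ 𝒯 W, T ∪ W = A := by
  simp [fibredFamily]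

theorem fibre_empty_subset_fibredFamily (h : ∅ ∈ 𝒲) : 𝒯 ∅ ⊆ fibredFamily 𝒲 𝒯 :=
  fun T hT => mem_fibredFamily.mpr ⟨∅, h, T, hT, union_empty T⟩

theorem unionClosed_fibredFamily (h𝒲 : UnionClosed 𝒲) (h𝒯 : ∀ W ∈ 𝒲, UnionClosed (𝒯 W))
    (hmono : ∀ W ∈ 𝒲, ∀ W' ∈ 𝒲, W ⊆ W' → 𝒯 W ⊆ 𝒯 W') :
    UnionClosed (fibredFamily 𝒲 𝒯) := by
  simp only [UnionClosed, mem_fibredFamily]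
  rintro _ ⟨W, hW, T, hT, rfl⟩ _ ⟨W', hW', T', hT', rfl⟩
  have hWW' := h𝒲 W hW W' hW'
  refine ⟨W ∪ W', hWW', T ∪ T', h𝒯 _ hWW' T ?_ T' ?_, union_union_union_comm T T' W W'⟩
  · exact hmono W hW _ hWW' subset_union_left hT
  · exact hmono W' hW' _ hWW' subset_union_right hT'

theorem card_fibredFamily {Y : Finset ℕ} (hY : ∀ W ∈ 𝒲, W ⊆ Y)
    (h𝒯 : ∀ W ∈ 𝒲, ∀ T ∈ 𝒯 W, Disjoint T Y) :
    #(fibredFamily 𝒲 𝒯) = ∑ W ∈ 𝒲, #(𝒯 W) := by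
  have inter_Y {W T} (hW : W ∈ 𝒲) (hT : T ∈ 𝒯 W) : (T ∪ W) ∩ Y = W := by
    rw [union_inter_distrib_right, disjoint_iff_inter_eq_empty.mp (h𝒯 W hW T hT),
      inter_eq_left.mpr (hY W hW), empty_union]
  have sdiff_Y {W T} (hW : W ∈ 𝒲) (hT : T ∈ 𝒯 W) : (T ∪ W) \ Y = T := by
    rw [union_sdiff_distrib, sdiff_eq_self_of_disjoint (h𝒯 W hW T hT),
      sdiff_eq_empty_iff_subset.mpr (hY W hW), union_empty]
  rw [fibredFamily, card_biUnion]
  · refine sum_congr rfl fun W hW => card_image_of_injOn fun T hT T' hT' h => ?_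
    rw [← sdiff_Y hW hT, ← sdiff_Y hW hT']
    exact congrArg (· \ Y) h
  · intro W hW W' hW' hne
    simp only [Function.onFun, disjoint_left, mem_image]
    rintro _ ⟨T, hT, rfl⟩ ⟨T', hT', h⟩
    exact hne (by rw [← inter_Y hW hT, ← h, inter_Y hW' hT'])

theorem filter_mem_fibredFamily {x : ℕ} (hx : ∀ W ∈ 𝒲, x ∉ W) :
    (fibredFamily 𝒲 𝒯).filter (x ∈ ·) = fibredFamily 𝒲 fun W => (𝒯 W).filter (x ∈ ·) := by
  rw [fibredFamily, filter_biUnion]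
  refine biUnion_congr rfl fun W hW => ?_
  rw [filter_image]
  simp only [mem_union, hx W hW, or_false]

theorem card_filter_mem_fibredFamily {Y : Finset ℕ} (hY : ∀ W ∈ 𝒲, W ⊆ Y)
    (h𝒯 : ∀ W ∈ 𝒲, ∀ T ∈ 𝒯 W, Disjoint T Y) {x : ℕ} (hx : x ∉ Y) :
    #((fibredFamily 𝒲 𝒯).filter (x ∈ ·)) = ∑ W ∈ 𝒲, #((𝒯 W).filter (x ∈ ·)) := by
  rw [filter_mem_fibredFamily fun W hW hxW => hx (hY W hW hxW)]
  exact card_fibredFamily hY fun W hW T hT => h𝒯 W hW T (mem_filter.mp hT).1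

end FibredFamily

section CoatomFamily

variable {α : Type*} [DecidableEq α]

def coatomFamily (G : Finset α) : Finset (Finset α) :=
  insert ∅ (insert G (G.image G.erase))

theorem mem_coatomFamily {G W : Finset α} :
    W ∈ coatomFamily G ↔ W = ∅ ∨ W = G ∨ ∃ g ∈ G, G.erase g = W := by
  simp [coatomFamily]

theorem subset_of_mem_coatomFamily {G W : Finset α} (hW : W ∈ coatomFamily G) : W ⊆ G := by
  rcases mem_coatomFamily.mp hW with rfl | rfl | ⟨g, -, rfl⟩
  exacts [empty_subset G, subset_rfl, erase_subset g G]

theorem sum_coatomFamily {M : Type*} [AddCommMonoid M] {G : Finset α} (hG : 1 < #G)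
    (f : Finset α → M) :
    ∑ W ∈ coatomFamily G, f W = f ∅ + f G + ∑ g ∈ G, f (G.erase g) := by
  have erase_nonempty {g} (hg : g ∈ G) : (G.erase g).Nonempty := by
    rw [← card_pos, card_erase_of_mem hg]; omega
  have empty_notMem : ∅ ∉ insert G (G.image G.erase) := by
    simp only [mem_insert, mem_image, not_or, not_exists, not_and]
    exact ⟨fun h => by simp [← h] at hG, fun g hg => (erase_nonempty hg).ne_empty⟩
  have top_notMem : G ∉ G.image G.erase := by
    simp only [mem_image, not_exists, not_and]
    exact fun g hg => erase_eq_self.not.mpr (not_not.mpr hg)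
  rw [coatomFamily, sum_insert empty_notMem, sum_insert top_notMem, sum_image (erase_injOn G),
    add_assoc]

end CoatomFamily

theorem unionClosed_coatomFamily (G : Finset ℕ) : UnionClosed (coatomFamily G) := by
  have top_union {B} (hB : B ∈ coatomFamily G) : G ∪ B = G :=
    union_eq_left.mpr (subset_of_mem_coatomFamily hB)
  intro A hA B hB
  rcases mem_coatomFamily.mp hA with rfl | rfl | ⟨a, -, rfl⟩
  · rwa [empty_union]
  · rwa [top_union hB]
  rcases mem_coatomFamily.mp hB with rfl | rfl | ⟨b, -, rfl⟩
  · rwa [union_empty]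
  · rwa [union_comm, top_union hA]
  rcases eq_or_ne a b with rfl | hab
  · rwa [union_self]
  · have : G.erase a ∪ G.erase b = G := by
      ext x
      simp only [mem_union, mem_erase]
      grind
    rw [this]
    exact mem_coatomFamily.mpr (Or.inr (Or.inl rfl))

theorem UnionClosed.union_powerset {ℬ : Finset (Finset ℕ)} {X Y : Finset ℕ}
    (hℬ : UnionClosed ℬ) (hup : ∀ B ∈ ℬ, B ≠ ∅ → ∀ T ⊆ X, B ∪ T ∈ ℬ) (hY : Y ⊆ X) :
    UnionClosed (ℬ ∪ Y.powerset) := by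
  have mixed {B T} (hB : B ∈ ℬ) (hT : T ⊆ Y) : B ∪ T ∈ ℬ ∪ Y.powerset := by
    rcases eq_or_ne B ∅ with rfl | hne
    · rw [empty_union]; exact mem_union_right _ (mem_powerset.mpr hT)
    · exact mem_union_left _ (hup B hB hne T (hT.trans hY))
  intro A hA B hB
  rcases mem_union.mp hA with hA | hA <;> rcases mem_union.mp hB with hB | hB
  · exact mem_union_left _ (hℬ A hA B hB)
  · exact mixed hA (mem_powerset.mp hB)
  · exact union_comm B A ▸ mixed hB (mem_powerset.mp hA)
  · exact mem_union_right _
      (mem_powerset.mpr (union_subset (mem_powerset.mp hA) (mem_powerset.mp hB)))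

namespace FamilyThree

def ground : Finset ℕ := {1, 2, 3, 4, 5}

def base : Finset (Finset ℕ) :=
  {∅, {1, 2, 3}, {1, 2, 3, 4}, {1, 2, 3, 5}, {1, 2, 4, 5}, {1, 3, 4, 5}, {1, 2, 3, 4, 5}}

-- Irreducible, so that elaborating statements about `family` never tries to evaluate it;
-- the finite computations below go through the kernel (`decide +kernel`) instead.
@[irreducible] def atoms : Finset ℕ := Icc 6 76

def colour (g : ℕ) : ℕ :=
  if g < 29 then 1 else if g < 45 then 2 else if g < 61 then 3 else if g < 69 then 4 else 5

-- Over `W`, a subset of `ground` may sit if it lies in `base` or avoids the colours of all atoms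
-- missing from `W`; since every colour is used, `fibre ∅ = base`.
def fibre (W : Finset ℕ) : Finset (Finset ℕ) :=
  base ∪ (ground \ (atoms \ W).image colour).powerset

def family : Finset (Finset ℕ) :=
  fibredFamily (coatomFamily atoms) fibre

theorem generatedFamily_eq_base :
    generatedFamily {{1, 2, 3}, {1, 2, 3, 4}, {1, 2, 3, 5}, {1, 2, 4, 5}, {1, 3, 4, 5}} = base := by
  decide

theorem unionClosed_base : UnionClosed base := by
  unfold UnionClosed; decide

theorem union_mem_base : ∀ B ∈ base, B ≠ ∅ → ∀ T ∈ ground.powerset, B ∪ T ∈ base := by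
  decide

theorem base_subset_powerset : base ⊆ ground.powerset := by decide

theorem disjoint_ground_atoms : Disjoint ground atoms := by decide +kernel

theorem fibre_mono {W W' : Finset ℕ} (h : W ⊆ W') : fibre W ⊆ fibre W' :=
  union_subset_union_right <| powerset_mono.mpr <|
    sdiff_subset_sdiff subset_rfl <| image_subset_image <| sdiff_subset_sdiff subset_rfl h

theorem unionClosed_fibre (W : Finset ℕ) : UnionClosed (fibre W) :=
  unionClosed_base.union_powerset
    (fun B hB hne T hT => union_mem_base B hB hne T (mem_powerset.mpr hT)) sdiff_subset

theorem disjoint_atoms_of_mem_fibre {W T : Finset ℕ} (hT : T ∈ fibre W) : Disjoint T atoms := by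
  refine disjoint_ground_atoms.mono_left (mem_powerset.mp ?_)
  exact union_subset base_subset_powerset (powerset_mono.mpr sdiff_subset) hT

theorem fibre_erase {g : ℕ} (hg : g ∈ atoms) :
    fibre (atoms.erase g) = base ∪ (ground.erase (colour g)).powerset := by
  rw [fibre, sdiff_erase_self hg, image_singleton, sdiff_singleton_eq_erase]

theorem unionClosed_family : UnionClosed family :=
  unionClosed_fibredFamily (unionClosed_coatomFamily atoms) (fun W _ => unionClosed_fibre W)
    (fun _ _ _ _ => fibre_mono)

theorem base_subset_family : base ⊆ family :=
  (subset_union_left : base ⊆ fibre ∅).trans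
    (fibre_empty_subset_fibredFamily (𝒯 := fibre) (mem_coatomFamily.mpr (Or.inl rfl)))

theorem sum_coatomFamily_fibre (f : Finset (Finset ℕ) → ℕ) :
    ∑ W ∈ coatomFamily atoms, f (fibre W) =
      f (fibre ∅) + f (fibre atoms) +
        ∑ g ∈ atoms, f (base ∪ (ground.erase (colour g)).powerset) := by
  rw [sum_coatomFamily (by decide +kernel)]
  exact congrArg _ (sum_congr rfl fun g hg => by rw [fibre_erase hg])

set_option maxRecDepth 100000 in
theorem card_family : #family = 1537 := by
  rw [family, card_fibredFamily (fun _ => subset_of_mem_coatomFamily)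
    (fun _ _ _ => disjoint_atoms_of_mem_fibre), sum_coatomFamily_fibre (#·)]
  decide +kernel

set_option maxRecDepth 100000 in
theorem card_filter_family {x : ℕ} (hx : x ∈ ground) : #(family.filter (x ∈ ·)) = 768 := by
  rw [family, card_filter_mem_fibredFamily (fun _ => subset_of_mem_coatomFamily)
    (fun _ _ _ => disjoint_atoms_of_mem_fibre) (disjoint_left.mp disjoint_ground_atoms hx),
    sum_coatomFamily_fibre (fun 𝒯 => #(𝒯.filter (x ∈ ·)))]
  fin_cases hx <;> decide +kernel

end FamilyThree

/-- The family generated by {1,2,3}, {1,2,3,4}, {1,2,3,5}, {1,2,4,5} and {1,3,4,5}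
is not FC. -/
theorem not_fc_family_three :
    ∃ 𝒜 : Finset (Finset ℕ), UnionClosed 𝒜 ∧
      generatedFamily {({1,2,3} : Finset ℕ), {1,2,3,4}, {1,2,3,5}, {1,2,4,5}, {1,3,4,5}} ⊆ 𝒜 ∧
      ∀ x ∈ ({1,2,3,4,5} : Finset ℕ),
        2 * (𝒜.filter (fun A => x ∈ A)).card < 𝒜.card := by
  refine ⟨FamilyThree.family, FamilyThree.unionClosed_family, ?_, fun x hx => ?_⟩
  · rw [FamilyThree.generatedFamily_eq_base]
    exact FamilyThree.base_subset_family
  · rw [FamilyThree.card_filter_family hx, FamilyThree.card_family]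
    norm_num
end

section
/- Let k ≥ 1 and let n be an integer with n ≥ k and n ≥ 2k − 2. Let 𝒜 be a finite union-closed family of finite sets containing every k-element subset of {1, …, n}. Then there exists an element x ∈ {1, …, n} such that 2·|{A ∈ 𝒜 : x ∈ A}| ≥ |𝒜|. (The family generated by all k-subsets of an n-set is an FC-family; in particular FC(k,n) ≤ C(n,k).) -/
open Finset


/-- key ℕ binomial identity for the telescoping step -/
lemma choose_step (n k j : ℕ) (hj : j < k) (hkn : k ≤ n) :
    k.choose j * ((n - j) * (n - j - 1).choose (k - j - 1)) =
      (j + 1) * k.choose (j + 1) * (n - j).choose (k - j) := by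
  have hjn : j < n := lt_of_lt_of_le hj hkn
  have h1 : k.choose (j+1) * (j+1) = k.choose j * (k - j) := Nat.choose_succ_right_eq k j
  have h2 : (n - j) * (n - j - 1).choose (k - j - 1) = (n - j).choose (k - j) * (k - j) := by
    have := Nat.add_one_mul_choose_eq (n - j - 1) (k - j - 1)
    have hn' : n - j - 1 + 1 = n - j := by omega
    have hk' : k - j - 1 + 1 = k - j := by omega
    rw [hn', hk'] at this
    linarith [this]
  calc k.choose j * ((n - j) * (n - j - 1).choose (k - j - 1))
      = k.choose j * ((n - j).choose (k - j) * (k - j)) := by rw [h2]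
    _ = (k.choose j * (k - j)) * (n - j).choose (k - j) := by ring
    _ = (k.choose (j+1) * (j+1)) * (n - j).choose (k - j) := by rw [h1]
    _ = (j + 1) * k.choose (j + 1) * (n - j).choose (k - j) := by ring

/-- telescoping sum: the weighted identity E -/
lemma esum (n k : ℕ) (hkn : k ≤ n) :
    ∑ j ∈ Finset.range k,
      (k.choose j : ℚ) * ((n : ℚ) - 2 * j) / ((n - j).choose (k - j) : ℚ) = k := by
  have key : ∀ j < k,
      (k.choose j : ℚ) * ((n : ℚ) - 2 * j) / ((n - j).choose (k - j) : ℚ)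
        = ((j+1 : ℕ) : ℚ) * (k.choose (j+1) : ℚ) / ((n - (j+1)).choose (k - (j+1)) : ℚ)
          - (j : ℚ) * (k.choose j : ℚ) / ((n - j).choose (k - j) : ℚ) := by
    intro j hj
    have hd1 : (0:ℚ) < ((n - j).choose (k - j) : ℚ) := by
      exact_mod_cast Nat.choose_pos (Nat.sub_le_sub_right hkn j)
    have hd2 : (0:ℚ) < ((n - (j+1)).choose (k - (j+1)) : ℚ) := by
      exact_mod_cast Nat.choose_pos (Nat.sub_le_sub_right hkn (j+1))
    rw [div_sub_div _ _ (ne_of_gt hd2) (ne_of_gt hd1), div_eq_div_iff (ne_of_gt hd1) (by positivity)]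
    have hcast : ((n - j : ℕ) : ℚ) = (n : ℚ) - j := by
      have hle : j ≤ n := le_of_lt (lt_of_lt_of_le hj hkn)
      push_cast [hle]
      ring
    have hnat := choose_step n k j hj hkn
    have hnat' : (k.choose j : ℚ) * (((n - j:ℕ):ℚ) * ((n - j - 1).choose (k - j - 1) : ℚ)) =
        ((j:ℚ) + 1) * (k.choose (j + 1):ℚ) * ((n - j).choose (k - j):ℚ) := by
      exact_mod_cast congrArg (fun x : ℕ => (x : ℚ)) hnat
    have e1 : (n - (j+1)) = n - j - 1 := by omega
    have e2 : (k - (j+1)) = k - j - 1 := by omega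
    rw [e1, e2]
    -- goal: C(k,j)*(n-2j) * (C(n-j-1,k-j-1)*C(n-j,k-j)) = ((j+1)*C(k,j+1)*C(n-j,k-j) - j*C(k,j)*C(n-j-1,k-j-1)) * C(n-j,k-j)
    push_cast at hnat' ⊢
    rw [hcast] at hnat'
    nlinarith [hnat', sq_nonneg (((n-j).choose (k-j) : ℚ))]
  calc ∑ j ∈ Finset.range k, (k.choose j : ℚ) * ((n : ℚ) - 2 * j) / ((n - j).choose (k - j) : ℚ)
      = ∑ j ∈ Finset.range k,
        ((fun m : ℕ => (m : ℚ) * (k.choose m : ℚ) / ((n - m).choose (k - m) : ℚ)) (j+1)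
         - (fun m : ℕ => (m : ℚ) * (k.choose m : ℚ) / ((n - m).choose (k - m) : ℚ)) j) := by
        apply Finset.sum_congr rfl
        intro j hj
        simpa using key j (Finset.mem_range.mp hj)
    _ = (k : ℚ) * (k.choose k : ℚ) / ((n - k).choose (k - k) : ℚ) - 0 := by
        rw [Finset.sum_range_sub (fun m : ℕ => (m : ℚ) * (k.choose m : ℚ) / ((n - m).choose (k - m) : ℚ))]
        simp
    _ = k := by simp


/-- number of k-subsets of I containing a fixed T ⊆ I -/
lemma card_supersets (I T : Finset ℕ) (k : ℕ) (hTI : T ⊆ I) (hjk : T.card ≤ k) :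
    ((I.powersetCard k).filter (fun K => T ⊆ K)).card
      = (I.card - T.card).choose (k - T.card) := by
  have hc : (I \ T).card = I.card - T.card := Finset.card_sdiff_of_subset hTI
  rw [← hc, ← Finset.card_powersetCard (k - T.card) (I \ T)]
  apply Finset.card_bij' (fun K _ => K \ T) (fun V _ => V ∪ T)
  · intro K hK
    simp only [Finset.mem_filter, Finset.mem_powersetCard] at hK
    obtain ⟨⟨hKI, hKc⟩, hTK⟩ := hK
    rw [Finset.mem_powersetCard]
    constructor
    · exact Finset.sdiff_subset_sdiff hKI (le_refl T)
    · rw [Finset.card_sdiff_of_subset hTK, hKc]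
  · intro V hV
    rw [Finset.mem_powersetCard] at hV
    obtain ⟨hVsub, hVc⟩ := hV
    have hdisj : Disjoint V T := by
      refine Finset.disjoint_left.mpr fun a haV haT => ?_
      exact (Finset.mem_sdiff.mp (hVsub haV)).2 haT
    simp only [Finset.mem_filter, Finset.mem_powersetCard]
    refine ⟨⟨?_, ?_⟩, Finset.subset_union_right⟩
    · exact Finset.union_subset (hVsub.trans Finset.sdiff_subset) hTI
    · rw [Finset.card_union_of_disjoint hdisj, hVc]
      omega
  · intro K hK
    simp only [Finset.mem_filter] at hK
    exact Finset.sdiff_union_of_subset hK.2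
  · intro V hV
    rw [Finset.mem_powersetCard] at hV
    have hdisj : Disjoint V T := by
      refine Finset.disjoint_left.mpr fun a haV haT => ?_
      exact (Finset.mem_sdiff.mp (hV.1 haV)).2 haT
    exact Finset.union_sdiff_cancel_right hdisj



/-- sum of weights over all small subsets of a k-set equals k -/
lemma sum_powerset_small (n k : ℕ) (hkn : k ≤ n) (K : Finset ℕ) (hK : K.card = k) :
    ∑ T ∈ K.powerset.filter (fun T => T.card < k),
      ((n : ℚ) - 2 * T.card) / ((n - T.card).choose (k - T.card) : ℚ) = k := by
  have hsplit : K.powerset.filter (fun T => T.card < k)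
      = (Finset.range k).biUnion (fun j => K.powersetCard j) := by
    ext T
    simp only [Finset.mem_filter, Finset.mem_powerset, Finset.mem_biUnion, Finset.mem_range,
      Finset.mem_powersetCard]
    constructor
    · rintro ⟨h1, h2⟩; exact ⟨T.card, h2, h1, rfl⟩
    · rintro ⟨j, hj, h1, rfl⟩; exact ⟨h1, hj⟩
  rw [hsplit, Finset.sum_biUnion]
  · calc ∑ j ∈ Finset.range k, ∑ T ∈ K.powersetCard j,
        ((n : ℚ) - 2 * T.card) / ((n - T.card).choose (k - T.card) : ℚ)
        = ∑ j ∈ Finset.range k,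
            (k.choose j : ℚ) * ((n : ℚ) - 2 * j) / ((n - j).choose (k - j) : ℚ) := by
          apply Finset.sum_congr rfl
          intro j hj
          have : ∀ T ∈ K.powersetCard j,
              ((n : ℚ) - 2 * T.card) / ((n - T.card).choose (k - T.card) : ℚ)
                = ((n : ℚ) - 2 * j) / ((n - j).choose (k - j) : ℚ) := by
            intro T hT
            rw [(Finset.mem_powersetCard.mp hT).2]
          rw [Finset.sum_congr rfl this, Finset.sum_const, Finset.card_powersetCard, hK,
            nsmul_eq_mul, mul_div_assoc]
      _ = k := esum n k hkn
  · intro i hi j hj hij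
    exact Finset.disjoint_coe.mp (by exact_mod_cast K.pairwise_disjoint_powersetCard hij)




/-- Average set size in a k-up-closed family on ground set I is at least |I|/2. -/
lemma upclosed_avg (k : ℕ) (I : Finset ℕ) (𝒯 : Finset (Finset ℕ))
    (hk : 1 ≤ k) (hkn : k ≤ I.card) (hn : 2 * k - 2 ≤ I.card)
    (hsub : ∀ T ∈ 𝒯, T ⊆ I)
    (hup : ∀ T ∈ 𝒯, ∀ U : Finset ℕ, T ⊆ U → U ⊆ I → k ≤ U.card → U ∈ 𝒯) :
    (I.card : ℚ) * 𝒯.card ≤ ∑ T ∈ 𝒯, 2 * (T.card : ℚ) := by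
  classical
  set n := I.card with hn_def
  set S := 𝒯.filter (fun T => T.card < k) with hS
  set Bg := 𝒯.filter (fun T => ¬ T.card < k) with hBg
  set Bk := 𝒯.filter (fun T => T.card = k) with hBk
  set 𝒦 := I.powersetCard k with h𝒦
  set N := 𝒦.filter (fun K => ∃ T ∈ S, T ⊆ K) with hN
  set w : ℕ → ℚ := fun j => ((n : ℚ) - 2 * j) / ((n - j).choose (k - j) : ℚ) with hw
  set Crit : ℕ → Finset (Finset ℕ) :=
    fun x => Bg.filter (fun V => x ∈ V ∧ V.erase x ∉ Bg) with hCrit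
  have hBkBg : Bk ⊆ Bg := by
    intro V hV
    have h := Finset.mem_filter.mp hV
    exact Finset.mem_filter.mpr ⟨h.1, by omega⟩
  -- weights are nonneg for small sets
  have hwnn : ∀ j, j < k → 0 ≤ w j := by
    intro j hj
    apply div_nonneg
    · have h2 : 2 * j ≤ n := by omega
      have h2' : ((2 * j : ℕ) : ℚ) ≤ (n : ℚ) := by exact_mod_cast h2
      push_cast at h2'
      linarith
    · positivity
  -- (1) deficit bound : ∑_{T∈S} (n - 2|T|) ≤ k * |N|
  have h1 : ∑ T ∈ S, ((n : ℚ) - 2 * T.card) ≤ (k : ℚ) * N.card := by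
    have hstep : ∀ T ∈ S, ((n : ℚ) - 2 * T.card)
        = ∑ K ∈ 𝒦, (if T ⊆ K then w T.card else 0) := by
      intro T hT
      have hTS := Finset.mem_filter.mp hT
      have hTI : T ⊆ I := hsub T hTS.1
      have hTk : T.card ≤ k := le_of_lt hTS.2
      have hchoose : (((n - T.card).choose (k - T.card) : ℕ) : ℚ) ≠ 0 := by
        have : 0 < (n - T.card).choose (k - T.card) :=
          Nat.choose_pos (Nat.sub_le_sub_right hkn T.card)
        exact_mod_cast Nat.pos_iff_ne_zero.mp this
      rw [← Finset.sum_filter]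
      rw [Finset.sum_const, card_supersets I T k hTI hTk, nsmul_eq_mul, hw]
      field_simp
      rw [hn_def]
    rw [Finset.sum_congr rfl hstep, Finset.sum_comm]
    have hzero : ∀ K ∈ 𝒦.filter (fun K => ¬ ∃ T ∈ S, T ⊆ K),
        ∑ T ∈ S, (if T ⊆ K then w T.card else 0) = 0 := by
      intro K hK
      have h := (Finset.mem_filter.mp hK).2
      apply Finset.sum_eq_zero
      intro T hT
      rw [if_neg]
      intro hc
      exact h ⟨T, hT, hc⟩
    have hsplit := Finset.sum_filter_add_sum_filter_not 𝒦 (fun K => ∃ T ∈ S, T ⊆ K)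
      (fun K => ∑ T ∈ S, (if T ⊆ K then w T.card else 0))
    rw [← hsplit, Finset.sum_eq_zero hzero, add_zero]
    have hbound : ∀ K ∈ N, ∑ T ∈ S, (if T ⊆ K then w T.card else 0) ≤ (k : ℚ) := by
      intro K hK
      have hKmem := Finset.mem_filter.mp hK
      have hKcard : K.card = k := (Finset.mem_powersetCard.mp hKmem.1).2
      rw [← Finset.sum_filter]
      calc ∑ T ∈ S.filter (fun T => T ⊆ K), w T.card
          ≤ ∑ T ∈ K.powerset.filter (fun T => T.card < k), w T.card := by
            apply Finset.sum_le_sum_of_subset_of_nonneg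
            · intro T hT
              have h := Finset.mem_filter.mp hT
              have h2 := Finset.mem_filter.mp h.1
              exact Finset.mem_filter.mpr ⟨Finset.mem_powerset.mpr h.2, h2.2⟩
            · intro T hT _
              exact hwnn T.card (Finset.mem_filter.mp hT).2
        _ = (k : ℚ) := sum_powerset_small n k hkn K hKcard
    calc ∑ K ∈ N, ∑ T ∈ S, (if T ⊆ K then w T.card else 0)
        ≤ ∑ _K ∈ N, (k : ℚ) := Finset.sum_le_sum hbound
      _ = (k : ℚ) * N.card := by rw [Finset.sum_const, nsmul_eq_mul, mul_comm]
  -- (2) N ⊆ Bk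
  have h2 : N ⊆ Bk := by
    intro K hK
    have hKmem := Finset.mem_filter.mp hK
    obtain ⟨T, hTS, hTK⟩ := hKmem.2
    have hKpc := Finset.mem_powersetCard.mp hKmem.1
    have hT𝒯 : T ∈ 𝒯 := (Finset.mem_filter.mp hTS).1
    have : K ∈ 𝒯 := hup T hT𝒯 K hTK hKpc.1 (by rw [hKpc.2])
    exact Finset.mem_filter.mpr ⟨this, hKpc.2⟩
  -- (3) k * |Bk| ≤ ∑_{x∈I} |Crit x|
  have h3 : (k : ℚ) * Bk.card ≤ ∑ x ∈ I, ((Crit x).card : ℚ) := by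
    have hsub3 : ∀ x, (Bk.filter (fun V => x ∈ V)) ⊆ Crit x := by
      intro x V hV
      have h := Finset.mem_filter.mp hV
      have hVk := Finset.mem_filter.mp h.1
      refine Finset.mem_filter.mpr ⟨hBkBg h.1, h.2, ?_⟩
      intro hc
      have hcard := (Finset.mem_filter.mp hc).2
      rw [Finset.card_erase_of_mem h.2, hVk.2] at hcard
      omega
    have hcount : ∑ x ∈ I, ((Bk.filter (fun V => x ∈ V)).card : ℚ) = (k : ℚ) * Bk.card := by
      have : ∀ x ∈ I, ((Bk.filter (fun V => x ∈ V)).card : ℚ)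
          = ∑ V ∈ Bk, (if x ∈ V then (1 : ℚ) else 0) := by
        intro x _
        rw [← Finset.sum_filter, Finset.sum_const, nsmul_eq_mul, mul_one]
      rw [Finset.sum_congr rfl this, Finset.sum_comm]
      have : ∀ V ∈ Bk, ∑ x ∈ I, (if x ∈ V then (1 : ℚ) else 0) = (k : ℚ) := by
        intro V hV
        have hVmem := Finset.mem_filter.mp hV
        have hVI : V ⊆ I := hsub V hVmem.1
        rw [← Finset.sum_filter, Finset.sum_const, nsmul_eq_mul, mul_one]
        have : I.filter (fun x => x ∈ V) = V := by
          ext x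
          simp only [Finset.mem_filter]
          exact ⟨fun h => h.2, fun h => ⟨hVI h, h⟩⟩
        rw [this, hVmem.2]
      rw [Finset.sum_congr rfl this, Finset.sum_const, nsmul_eq_mul, mul_comm]
    rw [← hcount]
    apply Finset.sum_le_sum
    intro x hx
    exact_mod_cast Finset.card_le_card (hsub3 x)
  -- (4) ∑_{x∈I} |Crit x| ≤ ∑_{V∈Bg} (2|V| - n)
  have h4 : ∑ x ∈ I, ((Crit x).card : ℚ) ≤ ∑ V ∈ Bg, (2 * (V.card : ℚ) - n) := by
    have hperx : ∀ x ∈ I,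
        ((Bg.filter (fun V => x ∉ V)).card + (Crit x).card : ℕ)
          ≤ (Bg.filter (fun V => x ∈ V)).card := by
      intro x hx
      set Φ := (Bg.filter (fun V => x ∉ V)).image (insert x) with hΦ
      have hinj : Set.InjOn (insert x) ((Bg.filter (fun V => x ∉ V) : Finset (Finset ℕ)) : Set (Finset ℕ)) := by
        intro a ha b hb hab
        rw [Finset.mem_coe] at ha hb
        have hxa : x ∉ a := (Finset.mem_filter.mp ha).2
        have hxb : x ∉ b := (Finset.mem_filter.mp hb).2
        rw [← Finset.erase_insert hxa, ← Finset.erase_insert hxb, hab]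
      have hΦcard : Φ.card = (Bg.filter (fun V => x ∉ V)).card :=
        Finset.card_image_of_injOn hinj
      have hΦsub : Φ ⊆ Bg.filter (fun V => x ∈ V) := by
        intro W hW
        obtain ⟨V, hV, rfl⟩ := Finset.mem_image.mp hW
        have hVmem := Finset.mem_filter.mp hV
        have hVBg := Finset.mem_filter.mp hVmem.1
        have hins : insert x V ∈ 𝒯 := by
          apply hup V hVBg.1 (insert x V) (Finset.subset_insert x V)
            (Finset.insert_subset hx (hsub V hVBg.1))
          calc k ≤ V.card := by omega
            _ ≤ (insert x V).card := Finset.card_le_card (Finset.subset_insert x V)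
        refine Finset.mem_filter.mpr ⟨Finset.mem_filter.mpr ⟨hins, ?_⟩, Finset.mem_insert_self x V⟩
        have : V.card ≤ (insert x V).card := Finset.card_le_card (Finset.subset_insert x V)
        omega
      have hCritsub : Crit x ⊆ Bg.filter (fun V => x ∈ V) := by
        intro V hV
        have h := Finset.mem_filter.mp hV
        exact Finset.mem_filter.mpr ⟨h.1, h.2.1⟩
      have hdisj : Disjoint Φ (Crit x) := by
        rw [Finset.disjoint_left]
        intro W hW hW'
        obtain ⟨V, hV, rfl⟩ := Finset.mem_image.mp hW
        have hxV : x ∉ V := (Finset.mem_filter.mp hV).2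
        have hVBg : V ∈ Bg := (Finset.mem_filter.mp hV).1
        have h := (Finset.mem_filter.mp hW').2.2
        rw [Finset.erase_insert hxV] at h
        exact h hVBg
      calc (Bg.filter (fun V => x ∉ V)).card + (Crit x).card
          = (Φ ∪ Crit x).card := by
            rw [Finset.card_union_of_disjoint hdisj, hΦcard]
        _ ≤ (Bg.filter (fun V => x ∈ V)).card :=
            Finset.card_le_card (Finset.union_subset hΦsub hCritsub)
    -- now sum over x
    have hsum : ∑ V ∈ Bg, (2 * (V.card : ℚ) - n)
        = ∑ x ∈ I, (((Bg.filter (fun V => x ∈ V)).card : ℚ)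
            - ((Bg.filter (fun V => x ∉ V)).card : ℚ)) := by
      have hVform : ∀ V ∈ Bg, 2 * (V.card : ℚ) - n
          = ∑ x ∈ I, (if x ∈ V then (1 : ℚ) else -1) := by
        intro V hV
        have hVI : V ⊆ I := hsub V (Finset.mem_filter.mp hV).1
        have hfil : I.filter (fun x => x ∈ V) = V := by
          ext x
          simp only [Finset.mem_filter]
          exact ⟨fun h => h.2, fun h => ⟨hVI h, h⟩⟩
        have hsplit := Finset.sum_filter_add_sum_filter_not I (fun x => x ∈ V)
          (fun x => if x ∈ V then (1 : ℚ) else -1)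
        rw [← hsplit]
        have e1 : ∑ x ∈ I.filter (fun x => x ∈ V), (if x ∈ V then (1:ℚ) else -1)
            = (V.card : ℚ) := by
          rw [Finset.sum_congr rfl (fun x hx => if_pos (Finset.mem_filter.mp hx).2),
            Finset.sum_const, hfil, nsmul_eq_mul, mul_one]
        have e2 : ∑ x ∈ I.filter (fun x => ¬ x ∈ V), (if x ∈ V then (1:ℚ) else -1)
            = -(((I.filter (fun x => ¬ x ∈ V)).card : ℚ)) := by
          rw [Finset.sum_congr rfl (fun x hx => if_neg (Finset.mem_filter.mp hx).2),
            Finset.sum_const, nsmul_eq_mul, mul_neg, mul_one]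
        rw [e1, e2]
        have hc : (I.filter (fun x => x ∈ V)).card + (I.filter (fun x => ¬ x ∈ V)).card = n :=
          Finset.card_filter_add_card_filter_not (fun x => x ∈ V)
        rw [hfil] at hc
        have : ((I.filter (fun x => ¬ x ∈ V)).card : ℚ) = (n : ℚ) - V.card := by
          have : (I.filter (fun x => ¬ x ∈ V)).card = n - V.card := by omega
          rw [this]
          have hVn : V.card ≤ n := by omega
          push_cast [hVn]
          ring
        rw [this]
        ring
      rw [Finset.sum_congr rfl hVform, Finset.sum_comm]
      apply Finset.sum_congr rfl
      intro x _
      have hsplit := Finset.sum_filter_add_sum_filter_not Bg (fun V => x ∈ V)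
        (fun V => if x ∈ V then (1 : ℚ) else -1)
      rw [← hsplit]
      have e1 : ∑ V ∈ Bg.filter (fun V => x ∈ V), (if x ∈ V then (1:ℚ) else -1)
          = ((Bg.filter (fun V => x ∈ V)).card : ℚ) := by
        rw [Finset.sum_congr rfl (fun V hV => if_pos (Finset.mem_filter.mp hV).2),
          Finset.sum_const, nsmul_eq_mul, mul_one]
      have e2 : ∑ V ∈ Bg.filter (fun V => ¬ x ∈ V), (if x ∈ V then (1:ℚ) else -1)
          = -(((Bg.filter (fun V => ¬ x ∈ V)).card : ℚ)) := by
        rw [Finset.sum_congr rfl (fun V hV => if_neg (Finset.mem_filter.mp hV).2),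
          Finset.sum_const, nsmul_eq_mul, mul_neg, mul_one]
      rw [e1, e2]
      ring
    rw [hsum]
    apply Finset.sum_le_sum
    intro x hx
    have := hperx x hx
    have hq : ((Bg.filter (fun V => x ∉ V)).card : ℚ) + ((Crit x).card : ℚ)
        ≤ ((Bg.filter (fun V => x ∈ V)).card : ℚ) := by exact_mod_cast this
    linarith
  -- assemble
  have hS2 : ∑ T ∈ S, (2 * (T.card : ℚ) - n) = -(∑ T ∈ S, ((n : ℚ) - 2 * T.card)) := by
    rw [← Finset.sum_neg_distrib]
    apply Finset.sum_congr rfl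
    intro T _
    ring
  have hNBk : (k : ℚ) * N.card ≤ (k : ℚ) * Bk.card := by
    have := Finset.card_le_card h2
    have hkq : (0:ℚ) ≤ k := by positivity
    apply mul_le_mul_of_nonneg_left _ hkq
    exact_mod_cast this
  have htotal : ∑ T ∈ 𝒯, (2 * (T.card : ℚ) - n)
      = ∑ T ∈ S, (2 * (T.card : ℚ) - n) + ∑ T ∈ Bg, (2 * (T.card : ℚ) - n) :=
    (Finset.sum_filter_add_sum_filter_not 𝒯 (fun T => T.card < k) _).symm
  have hfinal : (0:ℚ) ≤ ∑ T ∈ 𝒯, (2 * (T.card : ℚ) - n) := by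
    rw [htotal, hS2]
    linarith
  have hexpand : ∑ T ∈ 𝒯, (2 * (T.card : ℚ) - n)
      = (∑ T ∈ 𝒯, 2 * (T.card : ℚ)) - (n : ℚ) * 𝒯.card := by
    rw [Finset.sum_sub_distrib, Finset.sum_const, nsmul_eq_mul, mul_comm]
  rw [hexpand] at hfinal
  linarith




/-- adding any big subset of the ground set keeps us in the family -/
lemma union_mem (k n : ℕ) (hk : 1 ≤ k) (𝒜 : Finset (Finset ℕ)) (hUC : UnionClosed 𝒜)
    (hall : ∀ T ⊆ Finset.Icc 1 n, T.card = k → T ∈ 𝒜) :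
    ∀ m : ℕ, ∀ A ∈ 𝒜, ∀ U : Finset ℕ, U ⊆ Finset.Icc 1 n → k ≤ U.card →
      (U \ A).card ≤ m → A ∪ U ∈ 𝒜 := by
  intro m
  induction m with
  | zero =>
    intro A hA U hUI hUk hm
    obtain ⟨Sk, hs1, hs2, hs3⟩ := Finset.exists_subsuperset_card_eq
      (Finset.sdiff_subset : U \ A ⊆ U) (by omega) hUk
    have hSk𝒜 : Sk ∈ 𝒜 := hall Sk (hs2.trans hUI) hs3
    have hmem : A ∪ Sk ∈ 𝒜 := hUC A hA Sk hSk𝒜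
    have heq : A ∪ Sk = A ∪ U := by
      apply Finset.Subset.antisymm
      · exact Finset.union_subset Finset.subset_union_left
          (hs2.trans Finset.subset_union_right)
      · intro x hx
        rcases Finset.mem_union.mp hx with h | h
        · exact Finset.mem_union_left _ h
        · by_cases hxA : x ∈ A
          · exact Finset.mem_union_left _ hxA
          · exact Finset.mem_union_right _ (hs1 (Finset.mem_sdiff.mpr ⟨h, hxA⟩))
    rwa [heq] at hmem
  | succ m ih =>
    intro A hA U hUI hUk hm
    by_cases hc : (U \ A).card ≤ k
    · obtain ⟨Sk, hs1, hs2, hs3⟩ := Finset.exists_subsuperset_card_eq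
        (Finset.sdiff_subset : U \ A ⊆ U) hc hUk
      have hSk𝒜 : Sk ∈ 𝒜 := hall Sk (hs2.trans hUI) hs3
      have hmem : A ∪ Sk ∈ 𝒜 := hUC A hA Sk hSk𝒜
      have heq : A ∪ Sk = A ∪ U := by
        apply Finset.Subset.antisymm
        · exact Finset.union_subset Finset.subset_union_left
            (hs2.trans Finset.subset_union_right)
        · intro x hx
          rcases Finset.mem_union.mp hx with h | h
          · exact Finset.mem_union_left _ h
          · by_cases hxA : x ∈ A
            · exact Finset.mem_union_left _ hxA
            · exact Finset.mem_union_right _ (hs1 (Finset.mem_sdiff.mpr ⟨h, hxA⟩))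
      rwa [heq] at hmem
    · obtain ⟨Sk, hs1, hs2⟩ := Finset.exists_subset_card_eq (s := U \ A) (n := k) (by omega)
      have hSk𝒜 : Sk ∈ 𝒜 := hall Sk ((hs1.trans Finset.sdiff_subset).trans hUI) hs2
      have hA' : A ∪ Sk ∈ 𝒜 := hUC A hA Sk hSk𝒜
      have hsd : U \ (A ∪ Sk) = (U \ A) \ Sk := by
        ext x
        simp only [Finset.mem_sdiff, Finset.mem_union]
        tauto
      have hcard : (U \ (A ∪ Sk)).card ≤ m := by
        rw [hsd, Finset.card_sdiff_of_subset hs1, hs2]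
        omega
      have := ih (A ∪ Sk) hA' U hUI hUk hcard
      have heq : A ∪ Sk ∪ U = A ∪ U := by
        apply Finset.Subset.antisymm
        · intro x hx
          rcases Finset.mem_union.mp hx with h | h
          · rcases Finset.mem_union.mp h with h' | h'
            · exact Finset.mem_union_left _ h'
            · exact Finset.mem_union_right _ ((hs1.trans Finset.sdiff_subset) h')
          · exact Finset.mem_union_right _ h
        · exact Finset.union_subset (Finset.subset_union_left.trans Finset.subset_union_left)
            Finset.subset_union_right
      rwa [heq] at this

/-- For `k ≥ 1` and `n ≥ max(k, 2k-2)`, the family of all `k`-subsets of `{1,…,n}` generates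
an FC-family; in particular `FC(k,n) ≤ C(n,k)`. -/
theorem fc_all_ksets
    (k n : ℕ) (hk : 1 ≤ k) (hnk : k ≤ n) (hn : 2 * k - 2 ≤ n)
    (𝒜 : Finset (Finset ℕ)) (hUC : UnionClosed 𝒜)
    (hall : ∀ T ⊆ Finset.Icc 1 n, T.card = k → T ∈ 𝒜) :
    ∃ x ∈ Finset.Icc 1 n, 2 * (𝒜.filter (fun A => x ∈ A)).card ≥ 𝒜.card := by
  classical
  set I := Finset.Icc 1 n with hI
  have hIcard : I.card = n := by rw [hI, Nat.card_Icc]; omega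
  -- fiberwise decomposition over the part outside I
  set g : Finset ℕ → Finset ℕ := fun A => A \ I with hg
  set 𝒪 := 𝒜.image g with h𝒪
  have hmaps : ∀ A ∈ 𝒜, g A ∈ 𝒪 := fun A hA => Finset.mem_image_of_mem g hA
  have hfib : ∀ O ∈ 𝒪,
      (n : ℚ) * ((𝒜.filter (fun A => g A = O)).card : ℚ)
        ≤ ∑ A ∈ 𝒜.filter (fun A => g A = O), 2 * (((A ∩ I).card : ℚ)) := by
    intro O hO
    set F := 𝒜.filter (fun A => g A = O) with hF
    set 𝒯 := F.image (fun A => A ∩ I) with h𝒯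
    have hinjOn : ∀ A ∈ F, ∀ B ∈ F, A ∩ I = B ∩ I → A = B := by
      intro A hA B hB hAB
      have hA' : g A = O := (Finset.mem_filter.mp hA).2
      have hB' : g B = O := (Finset.mem_filter.mp hB).2
      ext x
      by_cases hxI : x ∈ I
      · constructor
        · intro h
          have : x ∈ B ∩ I := hAB ▸ (Finset.mem_inter.mpr ⟨h, hxI⟩)
          exact (Finset.mem_inter.mp this).1
        · intro h
          have : x ∈ A ∩ I := hAB ▸ (Finset.mem_inter.mpr ⟨h, hxI⟩)
          exact (Finset.mem_inter.mp this).1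
      · constructor
        · intro h
          have hx : x ∈ g A := Finset.mem_sdiff.mpr ⟨h, hxI⟩
          rw [hA', ← hB'] at hx
          exact (Finset.mem_sdiff.mp hx).1
        · intro h
          have hx : x ∈ g B := Finset.mem_sdiff.mpr ⟨h, hxI⟩
          rw [hB', ← hA'] at hx
          exact (Finset.mem_sdiff.mp hx).1
    have hcard𝒯 : 𝒯.card = F.card := Finset.card_image_of_injOn hinjOn
    have hsum𝒯 : ∑ T ∈ 𝒯, 2 * ((T.card : ℚ)) = ∑ A ∈ F, 2 * (((A ∩ I).card : ℚ)) :=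
      Finset.sum_image hinjOn
    have hsub𝒯 : ∀ T ∈ 𝒯, T ⊆ I := by
      intro T hT
      obtain ⟨A, _, rfl⟩ := Finset.mem_image.mp hT
      exact Finset.inter_subset_right
    have hup𝒯 : ∀ T ∈ 𝒯, ∀ U : Finset ℕ, T ⊆ U → U ⊆ I → k ≤ U.card → U ∈ 𝒯 := by
      intro T hT U hTU hUI hUk
      obtain ⟨A, hAF, rfl⟩ := Finset.mem_image.mp hT
      have hA𝒜 : A ∈ 𝒜 := (Finset.mem_filter.mp hAF).1
      have hAO : g A = O := (Finset.mem_filter.mp hAF).2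
      have hmem : A ∪ U ∈ 𝒜 :=
        union_mem k n hk 𝒜 hUC hall (U \ A).card A hA𝒜 U hUI hUk le_rfl
      have hg' : g (A ∪ U) = O := by
        show (A ∪ U) \ I = O
        have : (A ∪ U) \ I = A \ I := by
          ext x
          simp only [Finset.mem_sdiff, Finset.mem_union]
          constructor
          · rintro ⟨h1 | h1, h2⟩
            · exact ⟨h1, h2⟩
            · exact absurd (hUI h1) h2
          · rintro ⟨h1, h2⟩; exact ⟨Or.inl h1, h2⟩
        rw [this]; exact hAO
      have hint : (A ∪ U) ∩ I = U := by
        rw [Finset.union_inter_distrib_right]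
        have h2 : U ∩ I = U := Finset.inter_eq_left.mpr hUI
        rw [h2]
        exact Finset.union_eq_right.mpr (fun x hx => hTU hx)
      exact Finset.mem_image.mpr ⟨A ∪ U, Finset.mem_filter.mpr ⟨hmem, hg'⟩, hint⟩
    have := upclosed_avg k I 𝒯 hk (hIcard ▸ hnk) (hIcard ▸ hn) hsub𝒯 hup𝒯
    rw [hIcard, hcard𝒯, hsum𝒯] at this
    exact this
  have hkey : (n : ℚ) * (𝒜.card : ℚ) ≤ ∑ A ∈ 𝒜, 2 * (((A ∩ I).card : ℚ)) := by
    have hc : 𝒜.card = ∑ O ∈ 𝒪, (𝒜.filter (fun A => g A = O)).card :=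
      Finset.card_eq_sum_card_fiberwise hmaps
    have hs : ∑ O ∈ 𝒪, ∑ A ∈ 𝒜.filter (fun A => g A = O), 2 * (((A ∩ I).card : ℚ))
        = ∑ A ∈ 𝒜, 2 * (((A ∩ I).card : ℚ)) :=
      Finset.sum_fiberwise_of_maps_to hmaps _
    rw [← hs, hc]
    push_cast
    rw [Finset.mul_sum]
    exact Finset.sum_le_sum hfib
  -- double count
  have hdc : ∑ x ∈ I, (𝒜.filter (fun A => x ∈ A)).card = ∑ A ∈ 𝒜, (A ∩ I).card := by
    have : ∀ x ∈ I, (𝒜.filter (fun A => x ∈ A)).card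
        = ∑ A ∈ 𝒜, (if x ∈ A then 1 else 0) := by
      intro x _
      rw [← Finset.sum_filter, Finset.sum_const, smul_eq_mul, mul_one]
    rw [Finset.sum_congr rfl this, Finset.sum_comm]
    apply Finset.sum_congr rfl
    intro A _
    rw [← Finset.sum_filter, Finset.sum_const, smul_eq_mul, mul_one]
    congr 1
    rw [Finset.filter_mem_eq_inter, Finset.inter_comm]
  -- pigeonhole
  by_contra hcon
  push_neg at hcon
  have hlt : ∀ x ∈ I, 2 * (𝒜.filter (fun A => x ∈ A)).card + 1 ≤ 𝒜.card := by
    intro x hx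
    have := hcon x hx
    omega
  have hsumlt : ∑ x ∈ I, (2 * (𝒜.filter (fun A => x ∈ A)).card + 1) ≤ n * 𝒜.card := by
    calc ∑ x ∈ I, (2 * (𝒜.filter (fun A => x ∈ A)).card + 1)
        ≤ ∑ _x ∈ I, 𝒜.card := Finset.sum_le_sum hlt
      _ = n * 𝒜.card := by rw [Finset.sum_const, smul_eq_mul, hIcard]
  have hkeyN : n * 𝒜.card ≤ ∑ A ∈ 𝒜, 2 * (A ∩ I).card := by
    have : ((n * 𝒜.card : ℕ) : ℚ) ≤ ((∑ A ∈ 𝒜, 2 * (A ∩ I).card : ℕ) : ℚ) := by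
      push_cast
      exact hkey
    exact_mod_cast this
  have e1 : ∑ x ∈ I, (2 * (𝒜.filter (fun A => x ∈ A)).card + 1)
      = 2 * (∑ x ∈ I, (𝒜.filter (fun A => x ∈ A)).card) + n := by
    rw [Finset.sum_add_distrib, Finset.sum_const, smul_eq_mul, mul_one, hIcard, ← Finset.mul_sum]
  have e2 : ∑ A ∈ 𝒜, 2 * (A ∩ I).card = 2 * ∑ A ∈ 𝒜, (A ∩ I).card := by
    rw [Finset.mul_sum]
  rw [e1, hdc] at hsumlt
  rw [e2] at hkeyN
  omega
end
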